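/- arXiv:1609.08975 — 4 statements merged into one kernel-verified Lean document; each statement's English description precedes it below -/
import Mathlib

section
/- Let A, A' be unital C*-algebras, f : A' → A a unital *-homomorphism, and ω a state on A. There exists a unique bounded linear map L_f : H_{ω∘f} → H_ω satisfying L_f([a']) = [f(a')] for all a' ∈ A'. Moreover L_f is a linear isometry (⟨L_f ψ, L_f φ⟩_ω = ⟨ψ, φ⟩_{ω∘f} for all ψ, φ), it intertwines the GNS representations in the sense that L_f ∘ π_{ω∘f}(a') = π_ω(f(a')) ∘ L_f for all a' ∈ A', and L_f([1_{A'}]) = [1_A]. -/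
open scoped ComplexOrder InnerProductSpace

/-- A state on a unital C*-algebra `A`. -/
def IsState {A : Type*} [CStarAlgebra A] (ω : A →L[ℂ] ℂ) : Prop :=
  ω 1 = 1 ∧ ∀ a : A, 0 ≤ ω (star a * a)

/-!
Since `f` is a unital *-homomorphism, `⟪[f b], [f a]⟫_ω = ω (f (b⋆ * a)) = ⟪[b], [a]⟫_{ω ∘ f}`,
so `[a'] ↦ [f a']` is isometric on the dense subspace of classes and extends uniquely to `H_{ω ∘ f}`.
Every identity in the conclusion holds on classes by the GNS relations and passes to all
vectors by density and continuity.
-/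

theorem ContinuousLinearMap.ext_of_denseRange {R M N ι : Type*} [Semiring R]
    [TopologicalSpace M] [AddCommMonoid M] [Module R M]
    [TopologicalSpace N] [T2Space N] [AddCommMonoid N] [Module R N]
    {g : ι → M} (hg : DenseRange g) {L₁ L₂ : M →L[R] N} (h : ∀ i, L₁ (g i) = L₂ (g i)) :
    L₁ = L₂ :=
  coeFn_injective <| hg.equalizer L₁.continuous L₂.continuous (funext h)

theorem ContinuousLinearMap.inner_map_map_of_denseRange {𝕜 E F ι : Type*} [RCLike 𝕜]
    [NormedAddCommGroup E] [InnerProductSpace 𝕜 E] [NormedAddCommGroup F] [InnerProductSpace 𝕜 F]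
    {g : ι → E} (hg : DenseRange g) (L : E →L[𝕜] F)
    (h : ∀ i j, ⟪L (g i), L (g j)⟫_𝕜 = ⟪g i, g j⟫_𝕜) (x y : E) :
    ⟪L x, L y⟫_𝕜 = ⟪x, y⟫_𝕜 := by
  have hprod := (hg.prodMap hg).equalizer (g := fun p : E × E => ⟪L p.1, L p.2⟫_𝕜)
    (h := fun p => ⟪p.1, p.2⟫_𝕜) (by fun_prop) (by fun_prop) (funext fun ij => h ij.1 ij.2)
  exact congrFun hprod (x, y)

theorem gns_intertwiner_exists_unique_general
    {A A' : Type*} [CStarAlgebra A] [CStarAlgebra A']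
    (f : A' →L[ℂ] A)
    (hfmul : ∀ x y : A', f (x * y) = f x * f y)
    (hfstar : ∀ x : A', f (star x) = star (f x))
    (hfone : f 1 = 1)
    (ω : A →L[ℂ] ℂ)
    -- GNS data for ω on A
    {H : Type*} [NormedAddCommGroup H] [InnerProductSpace ℂ H] [CompleteSpace H]
    (q : A →ₗ[ℂ] H)
    (hinner : ∀ a b : A, ⟪q b, q a⟫_ℂ = ω (star b * a))
    (π : A →⋆ₐ[ℂ] (H →L[ℂ] H)) (hπ : ∀ a b : A, π a (q b) = q (a * b))
    -- GNS data for ω ∘ f on A'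
    {H' : Type*} [NormedAddCommGroup H'] [InnerProductSpace ℂ H'] [CompleteSpace H']
    (q' : A' →ₗ[ℂ] H') (hq' : DenseRange q')
    (hinner' : ∀ a b : A', ⟪q' b, q' a⟫_ℂ = ω (f (star b * a)))
    (π' : A' →⋆ₐ[ℂ] (H' →L[ℂ] H')) (hπ' : ∀ a b : A', π' a (q' b) = q' (a * b)) :
    (∃! L : H' →L[ℂ] H, ∀ a' : A', L (q' a') = q (f a')) ∧
    ∀ L : H' →L[ℂ] H, (∀ a' : A', L (q' a') = q (f a')) →
      (∀ ψ φ : H', ⟪L ψ, L φ⟫_ℂ = ⟪ψ, φ⟫_ℂ) ∧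
      (∀ (a' : A') (x : H'), L (π' a' x) = π (f a') (L x)) ∧
      L (q' 1) = q 1 := by
  have inner_map : ∀ a b : A', ⟪q (f a), q (f b)⟫_ℂ = ⟪q' a, q' b⟫_ℂ := fun a b => by
    rw [hinner, hinner', ← hfstar, ← hfmul]
  have norm_map : ∀ a : A', ‖q (f a)‖ = ‖q' a‖ := fun a => by
    rw [norm_eq_sqrt_re_inner (𝕜 := ℂ), norm_eq_sqrt_re_inner (𝕜 := ℂ), inner_map]
  have extend_eq : ∀ a' : A', (q ∘ₗ (f : A' →ₗ[ℂ] A)).extendOfNorm q' (q' a') = q (f a') :=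
    LinearMap.extendOfNorm_eq hq' ⟨1, fun a => by simp [norm_map]⟩
  refine ⟨⟨_, extend_eq, fun L hL =>
    ContinuousLinearMap.ext_of_denseRange hq' fun a => (hL a).trans (extend_eq a).symm⟩,
    fun L hL => ⟨L.inner_map_map_of_denseRange hq' fun a b => by rw [hL, hL, inner_map], ?_, ?_⟩⟩
  · intro a' x
    have intertwine : L ∘L π' a' = π (f a') ∘L L :=
      ContinuousLinearMap.ext_of_denseRange hq' fun b => by simp [hπ', hL, hπ, hfmul]
    exact congrArg (· x) intertwine
  · rw [hL, hfone]

/-- Functoriality of the GNS construction on morphisms.  Given a unital *-homomorphism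
`f : A' → A` and a state `ω` on `A`, let `(H, q, π)` be GNS data for `ω` (so `H` is the
Hilbert-space completion of `A / N_ω`, `q a = [a]` is the canonical class map with dense
range and `⟪q b, q a⟫ = ω (b⋆ * a)`, and `π` is the GNS representation with
`π a [b] = [a * b]`), and let `(H', q', π')` be GNS data for the pulled-back state `ω ∘ f`
on `A'`.  Then there is a unique bounded linear map `L_f : H' → H` with
`L_f [a'] = [f a']`; moreover any such map is a linear isometry, intertwines the GNS
representations (`L_f ∘ π' a' = π (f a') ∘ L_f`), and sends `[1]` to `[1]`. -/
theorem gns_intertwiner_exists_unique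
    {A A' : Type*} [CStarAlgebra A] [CStarAlgebra A']
    (f : A' →L[ℂ] A)
    (hfmul : ∀ x y : A', f (x * y) = f x * f y)
    (hfstar : ∀ x : A', f (star x) = star (f x))
    (hfone : f 1 = 1)
    (ω : A →L[ℂ] ℂ) (hω : IsState ω)
    -- GNS data for ω on A
    {H : Type*} [NormedAddCommGroup H] [InnerProductSpace ℂ H] [CompleteSpace H]
    (q : A →ₗ[ℂ] H) (hq : DenseRange q)
    (hinner : ∀ a b : A, ⟪q b, q a⟫_ℂ = ω (star b * a))
    (π : A →⋆ₐ[ℂ] (H →L[ℂ] H)) (hπ : ∀ a b : A, π a (q b) = q (a * b))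
    -- GNS data for ω ∘ f on A'
    {H' : Type*} [NormedAddCommGroup H'] [InnerProductSpace ℂ H'] [CompleteSpace H']
    (q' : A' →ₗ[ℂ] H') (hq' : DenseRange q')
    (hinner' : ∀ a b : A', ⟪q' b, q' a⟫_ℂ = ω (f (star b * a)))
    (π' : A' →⋆ₐ[ℂ] (H' →L[ℂ] H')) (hπ' : ∀ a b : A', π' a (q' b) = q' (a * b)) :
    (∃! L : H' →L[ℂ] H, ∀ a' : A', L (q' a') = q (f a')) ∧
    ∀ L : H' →L[ℂ] H, (∀ a' : A', L (q' a') = q (f a')) →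
      (∀ ψ φ : H', ⟪L ψ, L φ⟫_ℂ = ⟪ψ, φ⟫_ℂ) ∧
      (∀ (a' : A') (x : H'), L (π' a' x) = π (f a') (L x)) ∧
      L (q' 1) = q 1 :=
  gns_intertwiner_exists_unique_general f hfmul hfstar hfone ω q hinner π hπ q' hq' hinner' π' hπ'
end

section
/- Let A be a unital C*-algebra, (π, H, Ω) a pointed representation of A, and ω the state ω(a) := ⟨Ω, π(a) Ω⟩. Then: (i) for x ∈ A, ω(x⋆ * x) = 0 if and only if π(x)Ω = 0; (ii) there exists a unique bounded linear map m : H_ω → H satisfying m([a]) = π(a)Ω for all a ∈ A; (iii) m is a linear isometry, satisfies m ∘ π_ω(a) = π(a) ∘ m for all a ∈ A, and m([1_A]) = Ω. -/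
open scoped ComplexOrder InnerProductSpace

section DenseExtension

variable {𝕜 F G : Type*} [RCLike 𝕜] [NormedAddCommGroup F] [InnerProductSpace 𝕜 F]
  [NormedAddCommGroup G] [InnerProductSpace 𝕜 G]

theorem LinearMap.exists_continuousLinearMap_comp_eq_of_inner_eq {E : Type*} [AddCommGroup E]
    [Module 𝕜 E] [CompleteSpace G]
    {q : E →ₗ[𝕜] F} (hq : DenseRange q) (f : E →ₗ[𝕜] G)
    (hf : ∀ a b, ⟪f b, f a⟫_𝕜 = ⟪q b, q a⟫_𝕜) :
    ∃ m : F →L[𝕜] G, ∀ a, m (q a) = f a := by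
  have hnorm : ∀ a, ‖f a‖ ≤ 1 * ‖q a‖ := fun a => by
    rw [one_mul, @norm_eq_sqrt_re_inner 𝕜, @norm_eq_sqrt_re_inner 𝕜, hf]
  exact ⟨f.extendOfNorm q, LinearMap.extendOfNorm_eq hq ⟨1, hnorm⟩⟩

theorem ContinuousLinearMap.inner_map_map_of_denseRange_s13 {E : Type*} {q : E → F}
    (hq : DenseRange q) (m : F →L[𝕜] G)
    (hm : ∀ a b, ⟪m (q a), m (q b)⟫_𝕜 = ⟪q a, q b⟫_𝕜) (x y : F) :
    ⟪m x, m y⟫_𝕜 = ⟪x, y⟫_𝕜 :=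
  hq.induction_on₂ (p := fun x y => ⟪m x, m y⟫_𝕜 = ⟪x, y⟫_𝕜)
    (isClosed_eq (by fun_prop) (by fun_prop)) hm x y

end DenseExtension

section Representation

variable {A H : Type*} [Semiring A] [Algebra ℂ A] [StarRing A]
  [NormedAddCommGroup H] [InnerProductSpace ℂ H] [CompleteSpace H]
  (π : A →⋆ₐ[ℂ] (H →L[ℂ] H))

theorem StarAlgHom.inner_apply_apply (v : H) (a b : A) :
    ⟪π b v, π a v⟫_ℂ = ⟪v, π (star b * a) v⟫_ℂ := by
  rw [map_mul, map_star, mul_apply_eq_comp, ContinuousLinearMap.star_eq_adjoint,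
    ContinuousLinearMap.adjoint_inner_right]

noncomputable def StarAlgHom.orbitMap (v : H) : A →ₗ[ℂ] H :=
  (ContinuousLinearMap.apply ℂ H v).toLinearMap ∘ₗ π.toAlgHom.toLinearMap

end Representation

theorem gns_comparison_map_general {A : Type*} [CStarAlgebra A]
    {H : Type*} [NormedAddCommGroup H] [InnerProductSpace ℂ H] [CompleteSpace H]
    (π : A →⋆ₐ[ℂ] (H →L[ℂ] H)) (Ω : H)
    (ω : A →L[ℂ] ℂ) (hω : ∀ a : A, ω a = ⟪Ω, π a Ω⟫_ℂ)
    -- GNS data for ω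
    {Hω : Type*} [NormedAddCommGroup Hω] [InnerProductSpace ℂ Hω] [CompleteSpace Hω]
    (q : A →ₗ[ℂ] Hω) (hq : DenseRange q)
    (hinner : ∀ a b : A, ⟪q b, q a⟫_ℂ = ω (star b * a))
    (πω : A →⋆ₐ[ℂ] (Hω →L[ℂ] Hω)) (hπω : ∀ a b : A, πω a (q b) = q (a * b)) :
    (∀ x : A, ω (star x * x) = 0 ↔ π x Ω = 0) ∧
    (∃! m : Hω →L[ℂ] H, ∀ a : A, m (q a) = π a Ω) ∧
    (∀ m : Hω →L[ℂ] H, (∀ a : A, m (q a) = π a Ω) →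
      (∀ ψ φ : Hω, ⟪m ψ, m φ⟫_ℂ = ⟪ψ, φ⟫_ℂ) ∧
      (∀ (a : A) (x : Hω), m (πω a x) = π a (m x)) ∧
      m (q 1) = Ω) := by
  have horbit : ∀ a b, ⟪π b Ω, π a Ω⟫_ℂ = ⟪q b, q a⟫_ℂ := fun a b => by
    rw [hinner, hω, π.inner_apply_apply]
  refine ⟨fun x => by rw [hω, ← π.inner_apply_apply, inner_self_eq_zero], ?_,
    fun m hm => ⟨?_, fun a x => ?_, by rw [hm, map_one, one_apply_eq_self]⟩⟩
  · obtain ⟨m, hm⟩ :=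
      LinearMap.exists_continuousLinearMap_comp_eq_of_inner_eq hq (π.orbitMap Ω) horbit
    refine ⟨m, hm, fun m' hm' => DFunLike.coe_injective ?_⟩
    exact hq.equalizer m'.continuous m.continuous (funext fun a => (hm' a).trans (hm a).symm)
  · exact m.inner_map_map_of_denseRange_s13 hq fun a b => by rw [hm, hm, horbit]
  · refine congrFun (hq.equalizer (g := fun x => m (πω a x)) (h := fun x => π a (m x))
      (by fun_prop) (by fun_prop) (funext fun b => ?_)) x
    simp only [Function.comp_apply, hπω, hm, map_mul, mul_apply_eq_comp]

/-- Let `(π, H, Ω)` be a pointed representation of `A` with vector state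
`ω a = ⟪Ω, π a Ω⟫`, and let `(Hω, q, πω)` be GNS data for `ω` (so `Hω` is the
Hilbert-space completion of `A / N_ω`, `q a = [a]` is the class map with dense range and
`⟪q b, q a⟫ = ω (b⋆ * a)`, and `πω a [b] = [a * b]`).  Then:
(i) `ω (x⋆ * x) = 0 ↔ π x Ω = 0`;
(ii) there is a unique bounded linear map `m : Hω → H` with `m [a] = π a Ω`;
(iii) any such map is a linear isometry, intertwines `πω` and `π`, and sends `[1]` to `Ω`. -/
theorem gns_comparison_map {A : Type*} [CStarAlgebra A]
    {H : Type*} [NormedAddCommGroup H] [InnerProductSpace ℂ H] [CompleteSpace H]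
    (π : A →⋆ₐ[ℂ] (H →L[ℂ] H)) (Ω : H) (hΩ : ‖Ω‖ = 1)
    (ω : A →L[ℂ] ℂ) (hω : ∀ a : A, ω a = ⟪Ω, π a Ω⟫_ℂ)
    -- GNS data for ω
    {Hω : Type*} [NormedAddCommGroup Hω] [InnerProductSpace ℂ Hω] [CompleteSpace Hω]
    (q : A →ₗ[ℂ] Hω) (hq : DenseRange q)
    (hinner : ∀ a b : A, ⟪q b, q a⟫_ℂ = ω (star b * a))
    (πω : A →⋆ₐ[ℂ] (Hω →L[ℂ] Hω)) (hπω : ∀ a b : A, πω a (q b) = q (a * b)) :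
    (∀ x : A, ω (star x * x) = 0 ↔ π x Ω = 0) ∧
    (∃! m : Hω →L[ℂ] H, ∀ a : A, m (q a) = π a Ω) ∧
    (∀ m : Hω →L[ℂ] H, (∀ a : A, m (q a) = π a Ω) →
      (∀ ψ φ : Hω, ⟪m ψ, m φ⟫_ℂ = ⟪ψ, φ⟫_ℂ) ∧
      (∀ (a : A) (x : Hω), m (πω a x) = π a (m x)) ∧
      m (q 1) = Ω) :=
  gns_comparison_map_general π Ω ω hω q hq hinner πω hπω
end

section
/- Segal's uniqueness theorem: Let A be a unital C*-algebra and (π, H, Ω) a cyclic representation of A (so {π(a)Ω : a ∈ A} is dense in H), and let ω be the state ω(a) := ⟨Ω, π(a) Ω⟩. Then the canonical isometry m : H_ω → H determined by m([a]) = π(a)Ω is a surjective linear isometry (a unitary). In particular, any cyclic representation of A whose vector state equals ω is unitarily equivalent to the GNS representation (π_ω, H_ω, [1_A]) via an intertwining unitary carrying the cyclic vector to [1_A]. -/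
open scoped ComplexOrder InnerProductSpace

/-- Segal's uniqueness theorem: if `(π, H, Ω)` is a *cyclic* representation of `A` with
vector state `ω a = ⟪Ω, π a Ω⟫`, and `(Hω, q, πω)` is GNS data for `ω`, then the canonical
comparison map `m : Hω → H` determined by `m [a] = π a Ω` is a surjective linear isometry
(a unitary) which intertwines `πω` and `π` and carries the GNS cyclic vector `[1]` to `Ω`.
Hence any cyclic representation with vector state `ω` is unitarily equivalent to the GNS
representation `(πω, Hω, [1])`. -/
theorem segal_uniqueness {A : Type*} [CStarAlgebra A]
    {H : Type*} [NormedAddCommGroup H] [InnerProductSpace ℂ H] [CompleteSpace H]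
    (π : A →⋆ₐ[ℂ] (H →L[ℂ] H)) (Ω : H) (hΩ : ‖Ω‖ = 1)
    (hcyc : DenseRange (fun a : A => π a Ω))
    (ω : A →L[ℂ] ℂ) (hω : ∀ a : A, ω a = ⟪Ω, π a Ω⟫_ℂ)
    -- GNS data for ω
    {Hω : Type*} [NormedAddCommGroup Hω] [InnerProductSpace ℂ Hω] [CompleteSpace Hω]
    (q : A →ₗ[ℂ] Hω) (hq : DenseRange q)
    (hinner : ∀ a b : A, ⟪q b, q a⟫_ℂ = ω (star b * a))
    (πω : A →⋆ₐ[ℂ] (Hω →L[ℂ] Hω)) (hπω : ∀ a b : A, πω a (q b) = q (a * b))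
    -- the canonical comparison map
    (m : Hω →L[ℂ] H) (hm : ∀ a : A, m (q a) = π a Ω) :
    (∀ ψ φ : Hω, ⟪m ψ, m φ⟫_ℂ = ⟪ψ, φ⟫_ℂ) ∧
    Function.Surjective m ∧
    (∀ (a : A) (x : Hω), m (πω a x) = π a (m x)) ∧
    m (q 1) = Ω := by
  have key : ∀ a b : A, ⟪m (q b), m (q a)⟫_ℂ = ⟪q b, q a⟫_ℂ := by
    intro a b
    rw [hm, hm, hinner, hω]
    have hb : π b = ContinuousLinearMap.adjoint (π (star b)) := by
      rw [← ContinuousLinearMap.star_eq_adjoint, ← map_star, star_star]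
    rw [hb, ContinuousLinearMap.adjoint_inner_left, ← ContinuousLinearMap.comp_apply,
      ← ContinuousLinearMap.mul_def, ← map_mul]
  have hnormfun : (fun ψ : Hω => ‖m ψ‖) = fun ψ => ‖ψ‖ := by
    refine Continuous.ext_on hq (by fun_prop) (by fun_prop) ?_
    rintro _ ⟨a, rfl⟩
    simp only
    rw [@norm_eq_sqrt_re_inner ℂ, @norm_eq_sqrt_re_inner ℂ _ _ _ _ (q a), key a a]
  have hnorm : ∀ ψ : Hω, ‖m ψ‖ = ‖ψ‖ := fun ψ => congrFun hnormfun ψ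
  have hiso : ∀ ψ φ : Hω, ⟪m ψ, m φ⟫_ℂ = ⟪ψ, φ⟫_ℂ :=
    (LinearMap.norm_map_iff_inner_map_map m).mp hnorm
  have hisom : Isometry m := AddMonoidHomClass.isometry_of_norm m hnorm
  have hsurj : Function.Surjective m := by
    have hclosed : IsClosed (Set.range m) := hisom.isClosedEmbedding.isClosed_range
    have hdense : Dense (Set.range m) := by
      refine Dense.mono ?_ hcyc
      rintro _ ⟨a, rfl⟩
      exact ⟨q a, hm a⟩
    rw [← Set.range_eq_univ]
    rw [← hclosed.closure_eq]
    exact hdense.closure_eq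
  have hint : ∀ (a : A) (x : Hω), m (πω a x) = π a (m x) := by
    intro a
    have : (fun x : Hω => m (πω a x)) = fun x => π a (m x) := by
      refine Continuous.ext_on hq (by fun_prop) (by fun_prop) ?_
      rintro _ ⟨b, rfl⟩
      simp only
      rw [hπω, hm, hm, map_mul, ContinuousLinearMap.mul_apply]
    exact fun x => congrFun this x
  refine ⟨hiso, hsurj, hint, ?_⟩
  rw [hm, map_one, ContinuousLinearMap.one_apply]
end

section
/- Universal property of the GNS construction (object-level adjunction): Let A be a unital C*-algebra, ω a state on A, and (π, H, Ω) a pointed representation of A. Then there exists a bounded linear map L : H_ω → H satisfying L ∘ π_ω(a) = π(a) ∘ L for all a ∈ A, L([1_A]) = Ω, and L⋆ ∘ L = id (i.e. a morphism of pointed representations from the GNS representation (π_ω, H_ω, [1_A]) to (π, H, Ω)) if and only if ω(a) = ⟨Ω, π(a) Ω⟩ for all a ∈ A; moreover, when such a map exists it is unique. -/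
/-!
An isometric intertwiner `L` with `L [1] = Ω` must send `[a] = π_ω(a)[1]` to `π(a)Ω`, so it is
determined on the dense subspace `A / N_ω` (uniqueness), and comparing
`⟨[1], [a]⟩_ω = ω(a)` with `⟨L[1], L[a]⟩ = ⟨Ω, π(a)Ω⟩` gives the forward direction.
Conversely, if `ω` is the vector state of `Ω`, then `‖π(a)Ω‖² = ω(a⋆a) = ‖[a]‖²`, so
`[a] ↦ π(a)Ω` is a well-defined isometry on `A / N_ω` and extends by continuity to `H_ω`; the
intertwining relation holds on the dense subspace, hence everywhere.
-/

open scoped ComplexOrder InnerProductSpace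

namespace LinearMap

variable {𝕜 𝕜₂ E Eₗ F : Type*} [NormedDivisionRing 𝕜] [NormedDivisionRing 𝕜₂] {σ₁₂ : 𝕜 →+* 𝕜₂}
  [AddCommGroup E] [SeminormedAddCommGroup Eₗ] [NormedAddCommGroup F]
  [Module 𝕜 E] [Module 𝕜₂ F] [IsBoundedSMul 𝕜₂ F] [Module 𝕜 Eₗ] [IsBoundedSMul 𝕜 Eₗ]
  [CompleteSpace F] {f : E →ₛₗ[σ₁₂] F} {e : E →ₗ[𝕜] Eₗ}

theorem norm_extendOfNorm_apply_of_norm_eq (h_dense : DenseRange e)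
    (h_norm : ∀ x, ‖f x‖ = ‖e x‖) (y : Eₗ) : ‖f.extendOfNorm e y‖ = ‖y‖ := by
  have h_bound : ∃ C, ∀ x, ‖f x‖ ≤ C * ‖e x‖ := ⟨1, fun x => (h_norm x).trans_le (by simp)⟩
  refine h_dense.induction_on y (isClosed_eq (by fun_prop) continuous_norm) fun x => ?_
  rw [extendOfNorm_eq h_dense h_bound, h_norm]

end LinearMap

theorem StarAlgHom.inner_apply_apply_s19 {𝕜 A H : Type*} [RCLike 𝕜] [Semiring A] [Algebra 𝕜 A]
    [Star A] [NormedAddCommGroup H] [InnerProductSpace 𝕜 H] [CompleteSpace H]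
    (π : A →⋆ₐ[𝕜] (H →L[𝕜] H)) (Ω : H) (a b : A) :
    ⟪π b Ω, π a Ω⟫_𝕜 = ⟪Ω, π (star b * a) Ω⟫_𝕜 := by
  rw [map_mul, map_star, ContinuousLinearMap.star_eq_adjoint, mul_apply_eq_comp,
    ContinuousLinearMap.adjoint_inner_right]

namespace GNS

variable {A : Type*} [CStarAlgebra A] {ω : A →L[ℂ] ℂ}
  {Hω : Type*} [NormedAddCommGroup Hω] [InnerProductSpace ℂ Hω] [CompleteSpace Hω]
  {q : A →ₗ[ℂ] Hω} {πω : A →⋆ₐ[ℂ] (Hω →L[ℂ] Hω)}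
  {H : Type*} [NormedAddCommGroup H] [InnerProductSpace ℂ H] [CompleteSpace H]
  {π : A →⋆ₐ[ℂ] (H →L[ℂ] H)} {Ω : H}

theorem apply_eq_of_intertwines (hπω : ∀ a b : A, πω a (q b) = q (a * b)) {L : Hω →L[ℂ] H}
    (hL : ∀ (a : A) (x : Hω), L (πω a x) = π a (L x)) (hL_one : L (q 1) = Ω) (a : A) :
    L (q a) = π a Ω := by
  rw [← hL_one, ← hL, hπω, mul_one]

theorem eq_of_intertwines (hq : DenseRange q) (hπω : ∀ a b : A, πω a (q b) = q (a * b))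
    {L₁ L₂ : Hω →L[ℂ] H}
    (h₁ : ∀ (a : A) (x : Hω), L₁ (πω a x) = π a (L₁ x)) (h₁_one : L₁ (q 1) = Ω)
    (h₂ : ∀ (a : A) (x : Hω), L₂ (πω a x) = π a (L₂ x)) (h₂_one : L₂ (q 1) = Ω) :
    L₁ = L₂ :=
  DFunLike.coe_injective <| hq.equalizer L₁.continuous L₂.continuous <| funext fun a => by
    simp only [Function.comp_apply, apply_eq_of_intertwines hπω h₁ h₁_one,
      apply_eq_of_intertwines hπω h₂ h₂_one]

theorem eq_inner_of_isometry (hinner : ∀ a b : A, ⟪q b, q a⟫_ℂ = ω (star b * a))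
    {L : Hω →L[ℂ] H} (hL_iso : (ContinuousLinearMap.adjoint L).comp L = ContinuousLinearMap.id ℂ Hω)
    (hLq : ∀ a, L (q a) = π a Ω) (a : A) : ω a = ⟪Ω, π a Ω⟫_ℂ := by
  have hL_inner := L.inner_map_map_iff_adjoint_comp_self.mpr hL_iso
  calc ω a = ⟪q 1, q a⟫_ℂ := by rw [hinner, star_one, one_mul]
    _ = ⟪Ω, π a Ω⟫_ℂ := by rw [← hL_inner, hLq, hLq, map_one, one_apply_eq_self]

theorem exists_isometry_intertwines (hq : DenseRange q)
    (hinner : ∀ a b : A, ⟪q b, q a⟫_ℂ = ω (star b * a))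
    (hπω : ∀ a b : A, πω a (q b) = q (a * b)) (hω : ∀ a : A, ω a = ⟪Ω, π a Ω⟫_ℂ) :
    ∃ L : Hω →L[ℂ] H,
      (∀ (a : A) (x : Hω), L (πω a x) = π a (L x)) ∧
      L (q 1) = Ω ∧
      (ContinuousLinearMap.adjoint L).comp L = ContinuousLinearMap.id ℂ Hω := by
  let f : A →ₗ[ℂ] H := (ContinuousLinearMap.apply ℂ H Ω).toLinearMap ∘ₗ π.toLinearMap
  have hf : ∀ a, f a = π a Ω := fun a => rfl
  have hf_norm : ∀ a, ‖f a‖ = ‖q a‖ := fun a => by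
    rw [norm_eq_sqrt_re_inner (𝕜 := ℂ), norm_eq_sqrt_re_inner (𝕜 := ℂ) (q a), hf,
      π.inner_apply_apply_s19, hinner, hω]
  let L := f.extendOfNorm q
  have hLq : ∀ a, L (q a) = π a Ω := fun a =>
    LinearMap.extendOfNorm_eq hq ⟨1, fun a => (hf_norm a).trans_le (by simp)⟩ a
  refine ⟨L, fun a x => ?_, by rw [hLq, map_one, one_apply_eq_self], ?_⟩
  · have hcomm : L.comp (πω a) = (π a).comp L := DFunLike.coe_injective <|
      hq.equalizer (by fun_prop) (by fun_prop) <| funext fun b => by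
        simp only [Function.comp_apply, ContinuousLinearMap.coe_comp, hπω, hLq, map_mul,
          mul_apply_eq_comp]
    exact congrArg (· x) hcomm
  · rw [← ContinuousLinearMap.one_def, ← L.norm_map_iff_adjoint_comp_self]
    exact LinearMap.norm_extendOfNorm_apply_of_norm_eq hq hf_norm

end GNS

theorem gns_universal_property_general {A : Type*} [CStarAlgebra A]
    (ω : A →L[ℂ] ℂ)
    -- GNS data for ω
    {Hω : Type*} [NormedAddCommGroup Hω] [InnerProductSpace ℂ Hω] [CompleteSpace Hω]
    (q : A →ₗ[ℂ] Hω) (hq : DenseRange q)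
    (hinner : ∀ a b : A, ⟪q b, q a⟫_ℂ = ω (star b * a))
    (πω : A →⋆ₐ[ℂ] (Hω →L[ℂ] Hω)) (hπω : ∀ a b : A, πω a (q b) = q (a * b))
    -- a pointed representation of A
    {H : Type*} [NormedAddCommGroup H] [InnerProductSpace ℂ H] [CompleteSpace H]
    (π : A →⋆ₐ[ℂ] (H →L[ℂ] H)) (Ω : H) :
    ((∃ L : Hω →L[ℂ] H,
        (∀ (a : A) (x : Hω), L (πω a x) = π a (L x)) ∧
        L (q 1) = Ω ∧
        (ContinuousLinearMap.adjoint L).comp L = ContinuousLinearMap.id ℂ Hω) ↔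
      (∀ a : A, ω a = ⟪Ω, π a Ω⟫_ℂ)) ∧
    (∀ L₁ L₂ : Hω →L[ℂ] H,
      (∀ (a : A) (x : Hω), L₁ (πω a x) = π a (L₁ x)) → L₁ (q 1) = Ω →
      (ContinuousLinearMap.adjoint L₁).comp L₁ = ContinuousLinearMap.id ℂ Hω →
      (∀ (a : A) (x : Hω), L₂ (πω a x) = π a (L₂ x)) → L₂ (q 1) = Ω →
      (ContinuousLinearMap.adjoint L₂).comp L₂ = ContinuousLinearMap.id ℂ Hω →
      L₁ = L₂) := by
  refine ⟨⟨?_, GNS.exists_isometry_intertwines hq hinner hπω⟩, ?_⟩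
  · rintro ⟨L, hL, hL_one, hL_iso⟩
    exact GNS.eq_inner_of_isometry hinner hL_iso (GNS.apply_eq_of_intertwines hπω hL hL_one)
  · intro L₁ L₂ h₁ h₁_one _ h₂ h₂_one _
    exact GNS.eq_of_intertwines hq hπω h₁ h₁_one h₂ h₂_one

/-- Universal property of the GNS construction (object-level adjunction).  Let `ω` be a
state on `A` with GNS data `(Hω, q, πω)`, and let `(π, H, Ω)` be a pointed representation
of `A`.  There exists a morphism of pointed representations from `(πω, Hω, [1])` to
`(π, H, Ω)` — a bounded linear map `L : Hω → H` intertwining the representations, sending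
`[1]` to `Ω` and satisfying `L⋆ ∘ L = id` — if and only if `ω a = ⟪Ω, π a Ω⟫` for all
`a ∈ A`; moreover such a map is unique when it exists. -/
theorem gns_universal_property {A : Type*} [CStarAlgebra A]
    (ω : A →L[ℂ] ℂ) (hω : IsState ω)
    -- GNS data for ω
    {Hω : Type*} [NormedAddCommGroup Hω] [InnerProductSpace ℂ Hω] [CompleteSpace Hω]
    (q : A →ₗ[ℂ] Hω) (hq : DenseRange q)
    (hinner : ∀ a b : A, ⟪q b, q a⟫_ℂ = ω (star b * a))
    (πω : A →⋆ₐ[ℂ] (Hω →L[ℂ] Hω)) (hπω : ∀ a b : A, πω a (q b) = q (a * b))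
    -- a pointed representation of A
    {H : Type*} [NormedAddCommGroup H] [InnerProductSpace ℂ H] [CompleteSpace H]
    (π : A →⋆ₐ[ℂ] (H →L[ℂ] H)) (Ω : H) (hΩ : ‖Ω‖ = 1) :
    ((∃ L : Hω →L[ℂ] H,
        (∀ (a : A) (x : Hω), L (πω a x) = π a (L x)) ∧
        L (q 1) = Ω ∧
        (ContinuousLinearMap.adjoint L).comp L = ContinuousLinearMap.id ℂ Hω) ↔
      (∀ a : A, ω a = ⟪Ω, π a Ω⟫_ℂ)) ∧
    (∀ L₁ L₂ : Hω →L[ℂ] H,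
      (∀ (a : A) (x : Hω), L₁ (πω a x) = π a (L₁ x)) → L₁ (q 1) = Ω →
      (ContinuousLinearMap.adjoint L₁).comp L₁ = ContinuousLinearMap.id ℂ Hω →
      (∀ (a : A) (x : Hω), L₂ (πω a x) = π a (L₂ x)) → L₂ (q 1) = Ω →
      (ContinuousLinearMap.adjoint L₂).comp L₂ = ContinuousLinearMap.id ℂ Hω →
      L₁ = L₂) :=
  gns_universal_property_general ω q hq hinner πω hπω π Ω
end
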